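/- arXiv:0704.1493 — 5 statements merged into one kernel-verified Lean document; each statement's English description precedes it below -/
import Mathlib

section
/- The graph G on the 42 ordered pencils of the Fano plane, with adjacency as defined, is 12-regular. -/
/-- Points of the Fano plane: we use `1,…,7` inside `Fin 8`. -/
abbrev FPt := Fin 8

/-- The seven lines of the Fano plane. -/
def fanoLines : Finset (Finset FPt) :=
  {{1,2,3},{1,4,5},{1,6,7},{2,4,6},{2,5,7},{3,4,7},{3,5,6}}

/-- The seven points of the Fano plane. -/
def fanoPoints : Finset FPt := {1,2,3,4,5,6,7}

/-- `(p, pairs)` is an ordered pencil if for each `i`, `insert p (pairs i)`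
is a Fano line, and the three (2-element) pairs are distinct. -/
def IsPencil (v : FPt × (Fin 3 → Finset FPt)) : Prop :=
  v.1 ∈ fanoPoints ∧
  (∀ i, (v.2 i).card = 2 ∧ v.1 ∉ v.2 i ∧ insert v.1 (v.2 i) ∈ fanoLines) ∧
  Function.Injective v.2

instance : DecidablePred IsPencil := fun v => by
  unfold IsPencil Function.Injective; infer_instance

/-- Ordered pencils of the Fano plane: the vertices of the graph `G`. -/
def Pencil := {v : FPt × (Fin 3 → Finset FPt) // IsPencil v}

instance : DecidableEq Pencil := by unfold Pencil; infer_instance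
instance : Fintype Pencil := by unfold Pencil; infer_instance

/-- Adjacency: different base points, and the pairs in each position meet
in exactly one point. -/
def pAdj (v w : Pencil) : Prop :=
  v.1.1 ≠ w.1.1 ∧ ∀ i, (v.1.2 i ∩ w.1.2 i).card = 1

instance : DecidableRel pAdj := fun v w => by unfold pAdj; infer_instance

/-- The graph `G` on the 42 ordered pencils of the Fano plane. -/
def G : SimpleGraph Pencil where
  Adj := pAdj
  symm := ⟨fun v w h => ⟨h.1.symm, fun i => by rw [Finset.inter_comm]; exact h.2 i⟩⟩
  loopless := ⟨fun v h => h.1 rfl⟩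

instance : DecidableRel G.Adj := fun v w => by
  change Decidable (pAdj v w); infer_instance

/-!
A neighbour of `(p, L_a, L_b, L_c)` is based at one of the 6 points `p' ≠ p`; the line `pp'` must
keep its position, and the other two lines through `p'` fill the remaining two positions in either
order, giving `6 · 2 = 12` neighbours. To check this, note that an ordered pencil at `p` is an
ordering of the three lines through `p`, so pencils are parametrised by the 7 points and the 6
permutations of `Fin 3`; pulling `G` back along this bijection gives a graph on 42 enumerable
vertices, whose degrees are evaluated.
-/

open Function

lemma SimpleGraph.degree_comap_of_bijective {V W : Type*} {G : SimpleGraph W} {f : V → W}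
    (hf : Bijective f) (v : V) [Fintype ((G.comap f).neighborSet v)]
    [Fintype (G.neighborSet (f v))] : (G.comap f).degree v = G.degree (f v) := by
  rw [← card_neighborSet_eq_degree, ← card_neighborSet_eq_degree]
  exact Fintype.card_congr ((Equiv.ofBijective f hf).subtypeEquiv fun _ => Iff.rfl)

/-- `linePairs p j` is the `j`-th line through `p` with `p` removed; row `0` is junk, since `0` is
not a point of the plane. -/
def linePairs : FPt → Fin 3 → Finset FPt :=
  ![![∅, ∅, ∅],
    ![{2,3}, {4,5}, {6,7}],
    ![{1,3}, {4,6}, {5,7}],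
    ![{1,2}, {4,7}, {5,6}],
    ![{1,5}, {2,6}, {3,7}],
    ![{1,4}, {2,7}, {3,6}],
    ![{1,7}, {2,4}, {3,5}],
    ![{1,6}, {2,5}, {3,4}]]

set_option maxRecDepth 10000 in
lemma exists_linePairs_eq_iff : ∀ p ∈ fanoPoints, ∀ s : Finset FPt,
    (∃ j, linePairs p j = s) ↔ s.card = 2 ∧ p ∉ s ∧ insert p s ∈ fanoLines := by
  decide

lemma linePairs_injective : ∀ p ∈ fanoPoints, Injective (linePairs p) := by
  decide

def pencilOf (x : fanoPoints × Equiv.Perm (Fin 3)) : Pencil :=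
  ⟨(x.1, linePairs x.1 ∘ x.2), x.1.2,
    fun _ => (exists_linePairs_eq_iff _ x.1.2 _).1 ⟨_, rfl⟩,
    (linePairs_injective _ x.1.2).comp x.2.injective⟩

lemma pencilOf_bijective : Bijective pencilOf := by
  constructor
  · rintro ⟨p, σ⟩ ⟨q, τ⟩ h
    have hpq : p = q := Subtype.ext (congrArg (·.1.1) h)
    subst hpq
    have hpairs : linePairs p ∘ σ = linePairs p ∘ τ := congrArg (·.1.2) h
    exact Prod.ext rfl <| Equiv.ext fun i => linePairs_injective _ p.2 (congrFun hpairs i)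
  · rintro ⟨⟨p, pairs⟩, hp, hpairs, hinj⟩
    choose j hj using fun i => (exists_linePairs_eq_iff p hp (pairs i)).2 (hpairs i)
    have hj_inj : Injective j := fun a b hab => hinj <| by simp only [← hj, hab]
    refine ⟨(⟨p, hp⟩, Equiv.ofBijective j hj_inj.bijective_of_finite), ?_⟩
    exact Subtype.ext <| Prod.ext rfl <| funext hj

lemma degree_comap_pencilOf : ∀ x, (G.comap pencilOf).degree x = 12 := by
  decide +kernel

theorem G_twelve_regular : ∀ v : Pencil, G.degree v = 12 := by
  intro v
  obtain ⟨x, rfl⟩ := pencilOf_bijective.2 v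
  rw [← SimpleGraph.degree_comap_of_bijective pencilOf_bijective]
  exact degree_comap_pencilOf x
end

section
/- If two ordered pencils v and v' are adjacent in G, then the three intersection points (one from each index position a, b, c) form a line of the Fano plane. -/
/-!
Read the labels `1, …, 7` in binary as the nonzero vectors of `𝔽₂³`, so that addition is the
bitwise xor `⊕` (`^^^`); the lines of `fanoLines` are then exactly the triples `{x, y, z}` with
`x ⊕ y ⊕ z = 0`, and the pairs of a pencil with base point `p` are the three cosets `{a, a ⊕ p}`
of `⟨p⟩` other than `⟨p⟩` itself. These are the nonzero elements of `𝔽₂³ ⧸ ⟨p⟩ ≅ 𝔽₂²`, which sum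
to zero, so any three points picked one from each pair of the pencil have sum `0` or `p`. The
three intersection points of adjacent pencils with base points `p ≠ q` are such a choice for both
pencils, so their sum is `0`; being distinct and nonzero, they form a line.
-/

open Finset

def xorCoset (p a : FPt) : Finset FPt := {a, a ^^^ p}

set_option maxRecDepth 4000 in
lemma erase_eq_xorCoset_of_mem_fanoLines {L : Finset FPt} (hL : L ∈ fanoLines) {p x : FPt}
    (hp : p ∈ L) (hx : x ∈ L) (hxp : x ≠ p) : L.erase p = xorCoset p x := by
  revert L p x; decide

set_option maxRecDepth 4000 in
lemma zero_notMem_of_mem_fanoLines {L : Finset FPt} (hL : L ∈ fanoLines) : (0 : FPt) ∉ L := by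
  revert L; decide

lemma xor_xor_eq_zero_or_eq {p a b c : FPt} (hp : p ≠ 0) (ha : 0 ∉ xorCoset p a)
    (hb : 0 ∉ xorCoset p b) (hc : 0 ∉ xorCoset p c) (hab : xorCoset p a ≠ xorCoset p b)
    (hac : xorCoset p a ≠ xorCoset p c) (hbc : xorCoset p b ≠ xorCoset p c) :
    a ^^^ b ^^^ c = 0 ∨ a ^^^ b ^^^ c = p := by
  revert p a b c; decide

lemma mem_fanoLines_of_xor_eq_zero {a b c : FPt} (ha : a ≠ 0) (hb : b ≠ 0) (hab : a ≠ b)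
    (h : a ^^^ b ^^^ c = 0) : {a, b, c} ∈ fanoLines := by
  revert a b c; decide

namespace Pencil

variable (v : Pencil)

lemma base_ne_zero : v.1.1 ≠ 0 := fun h =>
  zero_notMem_of_mem_fanoLines (v.2.2.1 0).2.2 (h ▸ mem_insert_self _ _)

lemma zero_notMem_pair (i : Fin 3) : (0 : FPt) ∉ v.1.2 i := fun h =>
  zero_notMem_of_mem_fanoLines (v.2.2.1 i).2.2 (mem_insert_of_mem h)

lemma pair_eq_xorCoset {i : Fin 3} {x : FPt} (hx : x ∈ v.1.2 i) : v.1.2 i = xorCoset v.1.1 x := by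
  obtain ⟨-, hp, hline⟩ := v.2.2.1 i
  rw [← erase_insert hp]
  exact erase_eq_xorCoset_of_mem_fanoLines hline (mem_insert_self _ _) (mem_insert_of_mem hx)
    (ne_of_mem_of_not_mem hx hp)

variable {v}

lemma injective_of_forall_mem_pair {x : Fin 3 → FPt} (hx : ∀ i, x i ∈ v.1.2 i) :
    Function.Injective x := by
  intro i j hij
  apply v.2.2.2
  rw [v.pair_eq_xorCoset (hx i), v.pair_eq_xorCoset (hx j), hij]

lemma xor_eq_zero_or_eq_base_of_forall_mem_pair {x : Fin 3 → FPt} (hx : ∀ i, x i ∈ v.1.2 i) :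
    x 0 ^^^ x 1 ^^^ x 2 = 0 ∨ x 0 ^^^ x 1 ^^^ x 2 = v.1.1 := by
  have hcoset i : xorCoset v.1.1 (x i) = v.1.2 i := (v.pair_eq_xorCoset (hx i)).symm
  have hne {i j : Fin 3} (hij : i ≠ j) : xorCoset v.1.1 (x i) ≠ xorCoset v.1.1 (x j) := by
    rw [hcoset, hcoset]; exact v.2.2.2.ne hij
  have hzero i : (0 : FPt) ∉ xorCoset v.1.1 (x i) := hcoset i ▸ v.zero_notMem_pair i
  exact xor_xor_eq_zero_or_eq v.base_ne_zero (hzero 0) (hzero 1) (hzero 2)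
    (hne (by decide)) (hne (by decide)) (hne (by decide))

end Pencil

theorem adjacent_intersections_form_line :
    ∀ v w : Pencil, G.Adj v w →
      (v.1.2 0 ∩ w.1.2 0) ∪ (v.1.2 1 ∩ w.1.2 1) ∪ (v.1.2 2 ∩ w.1.2 2) ∈ fanoLines := by
  rintro v w ⟨hbase, hmeet⟩
  choose x hx using fun i => card_eq_one.mp (hmeet i)
  have hmem i : x i ∈ v.1.2 i ∧ x i ∈ w.1.2 i :=
    mem_inter.mp (by rw [hx i]; exact mem_singleton_self _)
  have hxv : ∀ i, x i ∈ v.1.2 i := fun i => (hmem i).1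
  have hxor : x 0 ^^^ x 1 ^^^ x 2 = 0 := by
    rcases Pencil.xor_eq_zero_or_eq_base_of_forall_mem_pair hxv with h | hv
    · exact h
    rcases Pencil.xor_eq_zero_or_eq_base_of_forall_mem_pair (fun i => (hmem i).2) with h | hw
    · exact h
    exact absurd (hv.symm.trans hw) hbase
  have hinj := Pencil.injective_of_forall_mem_pair hxv
  have hne_zero i : x i ≠ 0 := fun h => v.zero_notMem_pair i (h ▸ hxv i)
  simp only [hx, singleton_union, insert_union]
  exact mem_fanoLines_of_xor_eq_zero (hne_zero 0) (hne_zero 1) (hinj.ne (by decide)) hxor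
end

section
/- Two adjacent vertices of G never share their first coordinate; moreover, for each vertex v of G and each point p' distinct from the first coordinate of v, v has exactly 2 neighbors with first coordinate p'. -/
/-! A pencil at `p` lists the three pairs `L \ {p}`, `L ∋ p`, in some order. For pencils `v` at `p`
and `w` at `p' ≠ p`, the `i`-th pairs of `v` and `w` meet in exactly one point iff both or neither
of them come from the line `pp'`. So `w` is adjacent to `v` iff it puts the pair of `pp'` in the
same position as `v` does, and the other two pairs at `p'` can fill the remaining two positions in
two ways. -/

open Finset

lemma card_eq_three_of_mem_fanoLines : ∀ L ∈ fanoLines, #L = 3 := by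
  decide +kernel

lemma card_fanoLines_filter_mem : ∀ p ∈ fanoPoints, #{L ∈ fanoLines | p ∈ L} = 3 := by
  decide +kernel

lemma exists_mem_fanoLines : ∀ p ∈ fanoPoints, ∀ q ∈ fanoPoints, p ≠ q →
    ∃ L ∈ fanoLines, p ∈ L ∧ q ∈ L := by
  decide +kernel

lemma fanoLines_eq_of_mem : ∀ L ∈ fanoLines, ∀ M ∈ fanoLines, ∀ p ∈ L, ∀ q ∈ L, p ≠ q →
    p ∈ M → q ∈ M → L = M := by
  decide +kernel

/- If both lines are the line `pq`, the two pairs share its third point; if neither is, the lines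
meet in a single point other than `p` and `q`; otherwise they meet only in `p` or in `q`. -/
lemma card_erase_inter_erase_eq_one_iff : ∀ L ∈ fanoLines, ∀ M ∈ fanoLines, ∀ p ∈ L, ∀ q ∈ M,
    p ≠ q → (#(L.erase p ∩ M.erase q) = 1 ↔ (q ∈ L ↔ p ∈ M)) := by
  decide +kernel

def pairsAt (p : FPt) : Finset (Finset FPt) :=
  {L ∈ fanoLines | p ∈ L}.image (·.erase p)

lemma mem_pairsAt {p : FPt} {s : Finset FPt} :
    s ∈ pairsAt p ↔ ∃ L ∈ fanoLines, p ∈ L ∧ L.erase p = s := by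
  simp only [pairsAt, mem_image, mem_filter, and_assoc]

lemma mem_pairsAt_iff {p : FPt} {s : Finset FPt} :
    s ∈ pairsAt p ↔ #s = 2 ∧ p ∉ s ∧ insert p s ∈ fanoLines := by
  constructor
  · rw [mem_pairsAt]
    rintro ⟨L, hL, hpL, rfl⟩
    refine ⟨?_, notMem_erase p L, by rwa [insert_erase hpL]⟩
    rw [card_erase_of_mem hpL, card_eq_three_of_mem_fanoLines L hL]
  · rintro ⟨-, hps, hs⟩
    exact mem_pairsAt.mpr ⟨_, hs, mem_insert_self p s, erase_insert hps⟩

lemma card_pairsAt {p : FPt} (hp : p ∈ fanoPoints) : #(pairsAt p) = 3 := by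
  rw [pairsAt, card_image_of_injOn, card_fanoLines_filter_mem p hp]
  exact (erase_injOn' p).mono fun L hL => (mem_filter.mp hL).2

lemma exists_mem_pairsAt {p q : FPt} (hp : p ∈ fanoPoints) (hq : q ∈ fanoPoints) (hpq : p ≠ q) :
    ∃ s ∈ pairsAt p, q ∈ s := by
  obtain ⟨L, hL, hpL, hqL⟩ := exists_mem_fanoLines p hp q hq hpq
  exact ⟨L.erase p, mem_pairsAt.mpr ⟨L, hL, hpL, rfl⟩, mem_erase.mpr ⟨hpq.symm, hqL⟩⟩

lemma eq_of_mem_pairsAt {p q : FPt} {s t : Finset FPt} (hs : s ∈ pairsAt p) (ht : t ∈ pairsAt p)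
    (hqs : q ∈ s) (hqt : q ∈ t) : s = t := by
  obtain ⟨L, hL, hpL, rfl⟩ := mem_pairsAt.mp hs
  obtain ⟨M, hM, hpM, rfl⟩ := mem_pairsAt.mp ht
  obtain ⟨hqp, hqL⟩ := mem_erase.mp hqs
  rw [fanoLines_eq_of_mem L hL M hM p hpL q hqL hqp.symm hpM (mem_erase.mp hqt).2]

lemma card_inter_eq_one_iff {p q : FPt} (hpq : p ≠ q) {s t : Finset FPt} (hs : s ∈ pairsAt p)
    (ht : t ∈ pairsAt q) : #(s ∩ t) = 1 ↔ (q ∈ s ↔ p ∈ t) := by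
  obtain ⟨L, hL, hpL, rfl⟩ := mem_pairsAt.mp hs
  obtain ⟨M, hM, hqM, rfl⟩ := mem_pairsAt.mp ht
  simp only [mem_erase, ne_eq, hpq, Ne.symm hpq, not_false_eq_true, true_and]
  exact card_erase_inter_erase_eq_one_iff L hL M hM p hpL q hqM hpq

lemma card_perm_fin_three_apply_eq (j k : Fin 3) :
    Fintype.card {σ : Equiv.Perm (Fin 3) // σ j = k} = 2 := by
  revert j k; decide +kernel

lemma card_equiv_fin_three_apply_eq {S : Type*} [Fintype S] [DecidableEq S]
    (hS : Fintype.card S = 3) (j : Fin 3) (s : S) :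
    Fintype.card {e : Fin 3 ≃ S // e j = s} = 2 := by
  let φ := Fintype.equivFinOfCardEq hS
  rw [← card_perm_fin_three_apply_eq j (φ s)]
  exact Fintype.card_congr <|
    (Equiv.equivCongr (Equiv.refl _) φ).subtypeEquiv fun e => φ.apply_eq_iff_eq.symm

namespace Pencil

variable (v : Pencil)

lemma base_mem : v.1.1 ∈ fanoPoints := v.2.1

lemma injective : Function.Injective v.1.2 := v.2.2.2

lemma base_notMem (i : Fin 3) : v.1.1 ∉ v.1.2 i := (v.2.2.1 i).2.1

lemma mem_pairsAt (i : Fin 3) : v.1.2 i ∈ pairsAt v.1.1 := mem_pairsAt_iff.mpr (v.2.2.1 i)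

lemma mem_pairsAt_of_base_eq {p : FPt} (hp : v.1.1 = p) (i : Fin 3) : v.1.2 i ∈ pairsAt p := by
  subst hp
  exact v.mem_pairsAt i

lemma exists_eq {s : Finset FPt} (hs : s ∈ pairsAt v.1.1) : ∃ i, v.1.2 i = s := by
  have himage : univ.image v.1.2 = pairsAt v.1.1 := by
    refine eq_of_subset_of_card_le (image_subset_iff.mpr fun i _ => v.mem_pairsAt i) ?_
    rw [card_image_of_injective _ v.injective, card_pairsAt v.base_mem, card_univ, Fintype.card_fin]
  rw [← himage] at hs
  simpa using hs

lemma exists_mem {q : FPt} (hq : q ∈ fanoPoints) (hqv : q ≠ v.1.1) : ∃ j, q ∈ v.1.2 j := by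
  obtain ⟨s, hs, hqs⟩ := exists_mem_pairsAt v.base_mem hq hqv.symm
  obtain ⟨j, rfl⟩ := v.exists_eq hs
  exact ⟨j, hqs⟩

lemma mem_iff_eq {q : FPt} {j : Fin 3} (hj : q ∈ v.1.2 j) (i : Fin 3) : q ∈ v.1.2 i ↔ i = j :=
  ⟨fun hi => v.injective (eq_of_mem_pairsAt (v.mem_pairsAt i) (v.mem_pairsAt j) hi hj),
    fun hij => hij ▸ hj⟩

noncomputable def equivOfBase (p : FPt) (hp : p ∈ fanoPoints) :
    {w : Pencil // w.1.1 = p} ≃ (Fin 3 ≃ pairsAt p) where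
  toFun w := Equiv.ofBijective (fun i => ⟨w.1.1.2 i, w.1.mem_pairsAt_of_base_eq w.2 i⟩) <| by
    rw [Fintype.bijective_iff_injective_and_card]
    refine ⟨fun i i' h => w.1.injective (congrArg Subtype.val h), ?_⟩
    simp [card_pairsAt hp]
  invFun e := ⟨⟨(p, fun i => e i), hp, fun i => mem_pairsAt_iff.mp (e i).2,
    fun i i' h => e.injective (Subtype.ext h)⟩, rfl⟩
  left_inv := by
    rintro ⟨⟨⟨p', f⟩, hw⟩, rfl : p' = p⟩
    rfl
  right_inv e := by
    ext
    rfl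

end Pencil

lemma adj_iff {v w : Pencil} :
    G.Adj v w ↔ v.1.1 ≠ w.1.1 ∧ ∀ i, (w.1.1 ∈ v.1.2 i ↔ v.1.1 ∈ w.1.2 i) :=
  and_congr_right fun hvw =>
    forall_congr' fun i => card_inter_eq_one_iff hvw (v.mem_pairsAt i) (w.mem_pairsAt i)

lemma adj_iff_of_mem {v w : Pencil} {j : Fin 3} (hj : w.1.1 ∈ v.1.2 j) :
    G.Adj v w ↔ v.1.1 ∈ w.1.2 j := by
  have hvw : v.1.1 ≠ w.1.1 := fun h => v.base_notMem j (h ▸ hj)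
  simp only [adj_iff, hvw, v.mem_iff_eq hj, ne_eq, not_false_eq_true, true_and]
  exact ⟨fun h => (h j).mp rfl, fun hvj i => (w.mem_iff_eq hvj i).symm⟩

lemma card_filter_base_eq_and_mem {p q : FPt} (hp : p ∈ fanoPoints) (hq : q ∈ fanoPoints)
    (hpq : p ≠ q) (j : Fin 3) : #{w : Pencil | w.1.1 = p ∧ q ∈ w.1.2 j} = 2 := by
  obtain ⟨t, ht, hqt⟩ := exists_mem_pairsAt hp hq hpq
  rw [← Fintype.card_subtype,
    ← card_equiv_fin_three_apply_eq (S := pairsAt p) (by simp [card_pairsAt hp]) j ⟨t, ht⟩]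
  refine Fintype.card_congr <| (Equiv.subtypeSubtypeEquivSubtypeInter _ _).symm.trans <|
    (Pencil.equivOfBase p hp).subtypeEquiv fun w => ?_
  simp only [Pencil.equivOfBase, Equiv.coe_fn_mk, Equiv.ofBijective_apply, Subtype.ext_iff]
  exact ⟨fun h => eq_of_mem_pairsAt (w.1.mem_pairsAt_of_base_eq w.2 j) ht h hqt, fun h => h ▸ hqt⟩

theorem neighbors_by_base_point :
    (∀ v w : Pencil, G.Adj v w → v.1.1 ≠ w.1.1) ∧
    (∀ v : Pencil, ∀ p' ∈ fanoPoints, p' ≠ v.1.1 →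
      (Finset.univ.filter (fun w : Pencil => G.Adj v w ∧ w.1.1 = p')).card = 2) := by
  refine ⟨fun v w h => h.1, fun v p' hp' hne => ?_⟩
  obtain ⟨j, hj⟩ := v.exists_mem hp' hne
  calc #{w : Pencil | G.Adj v w ∧ w.1.1 = p'}
      _ = #{w : Pencil | w.1.1 = p' ∧ v.1.1 ∈ w.1.2 j} := by
        refine congrArg card (filter_congr fun w _ => ?_)
        rw [and_comm]
        exact and_congr_right fun hw => adj_iff_of_mem (hw ▸ hj)
      _ = 2 := card_filter_base_eq_and_mem hp' v.base_mem hne j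
end

section
/- Every edge of G lies in exactly one of the 42 K_4-subgraphs indexed by ordered Fano lines, so G is the edge-disjoint union of 42 induced copies of K_4. -/
/-- The tetrahedron (copy of `K₄`) associated to an ordered Fano line `(x,y,z)`. -/
def tetra (x y z : FPt) : Finset Pencil :=
  Finset.univ.filter (fun v =>
    v.1.1 ∉ ({x, y, z} : Finset FPt) ∧ x ∈ v.1.2 0 ∧ y ∈ v.1.2 1 ∧ z ∈ v.1.2 2)


/-!
If `v = (p, A)` and `w = (q, B)` are adjacent, each `A i ∩ B i` is a single point `x i`, and any
ordered line whose tetrahedron contains `v` and `w` must be `(x 0, x 1, x 2)`. Conversely, `x i`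
and `x j` (`i ≠ j`) lie on different lines through `p`, and on different lines through `q`, so
neither `p` nor `q` is on a side of the "triangle" `x 0, x 1, x 2`. In the Fano plane the three
sides of a triangle cover six of the seven points, and `p ≠ q`; hence the `x i` are collinear.
-/

def FanoCollinear (a b c : FPt) : Prop :=
  ∃ L ∈ fanoLines, a ∈ L ∧ b ∈ L ∧ c ∈ L

instance (a b c : FPt) : Decidable (FanoCollinear a b c) := by
  unfold FanoCollinear; infer_instance

set_option maxRecDepth 10000 in
theorem subset_fanoPoints_of_mem_fanoLines {L : Finset FPt} (hL : L ∈ fanoLines) :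
    L ⊆ fanoPoints := by
  revert L; decide

set_option maxRecDepth 10000 in
theorem fanoLines_eq_of_mem_of_mem {L M : Finset FPt} {a b : FPt} (hL : L ∈ fanoLines)
    (hM : M ∈ fanoLines) (hab : a ≠ b) (haL : a ∈ L) (hbL : b ∈ L) (haM : a ∈ M) (hbM : b ∈ M) :
    L = M := by
  revert a b; revert M; revert L; decide

set_option maxRecDepth 10000 in
theorem mem_fanoLines_of_not_collinear {p q x y z : FPt} (hpq : p ≠ q)
    (hp : p ∈ fanoPoints) (hq : q ∈ fanoPoints)
    (hx : x ∈ fanoPoints) (hy : y ∈ fanoPoints) (hz : z ∈ fanoPoints)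
    (hpxy : ¬ FanoCollinear p x y) (hpxz : ¬ FanoCollinear p x z) (hpyz : ¬ FanoCollinear p y z)
    (hqxy : ¬ FanoCollinear q x y) (hqxz : ¬ FanoCollinear q x z) (hqyz : ¬ FanoCollinear q y z) :
    {x, y, z} ∈ fanoLines := by
  -- each variable is reverted together with its hypotheses, so that `decide` prunes early
  revert hpxy hpxz hpyz hqxy hqxz hqyz
  revert z; revert y; revert x; revert hpq; revert q; revert p
  decide

namespace IsPencil

variable {v : FPt × (Fin 3 → Finset FPt)}

theorem mem_fanoPoints (hv : IsPencil v) {i : Fin 3} {x : FPt} (hx : x ∈ v.2 i) :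
    x ∈ fanoPoints :=
  subset_fanoPoints_of_mem_fanoLines (hv.2.1 i).2.2 (Finset.mem_insert_of_mem hx)

theorem insert_eq_of_mem (hv : IsPencil v) {i : Fin 3} {x : FPt} {L : Finset FPt}
    (hL : L ∈ fanoLines) (hvL : v.1 ∈ L) (hx : x ∈ v.2 i) (hxL : x ∈ L) :
    insert v.1 (v.2 i) = L :=
  fanoLines_eq_of_mem_of_mem (hv.2.1 i).2.2 hL (ne_of_mem_of_not_mem hx (hv.2.1 i).2.1).symm
    (Finset.mem_insert_self _ _) (Finset.mem_insert_of_mem hx) hvL hxL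

theorem not_collinear (hv : IsPencil v) {i j : Fin 3} (hij : i ≠ j) {x y : FPt}
    (hx : x ∈ v.2 i) (hy : y ∈ v.2 j) : ¬ FanoCollinear v.1 x y := by
  rintro ⟨L, hL, hvL, hxL, hyL⟩
  refine hij (hv.2.2 ?_)
  rw [← Finset.erase_insert (hv.2.1 i).2.1, ← Finset.erase_insert (hv.2.1 j).2.1,
    hv.insert_eq_of_mem hL hvL hx hxL, hv.insert_eq_of_mem hL hvL hy hyL]

end IsPencil

theorem mem_tetra {v : Pencil} {x y z : FPt} :
    v ∈ tetra x y z ↔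
      v.1.1 ∉ ({x, y, z} : Finset FPt) ∧ x ∈ v.1.2 0 ∧ y ∈ v.1.2 1 ∧ z ∈ v.1.2 2 := by
  simp only [tetra, Finset.mem_filter, Finset.mem_univ, true_and]

theorem mem_tetra_of_mem {v : Pencil} {x y z : FPt} (hx : x ∈ v.1.2 0) (hy : y ∈ v.1.2 1)
    (hz : z ∈ v.1.2 2) : v ∈ tetra x y z := by
  have hbase (i : Fin 3) : v.1.1 ∉ v.1.2 i := (v.2.2.1 i).2.1
  rw [mem_tetra]
  refine ⟨?_, hx, hy, hz⟩
  simp only [Finset.mem_insert, Finset.mem_singleton]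
  rintro (rfl | rfl | rfl)
  exacts [hbase 0 hx, hbase 1 hy, hbase 2 hz]

set_option maxRecDepth 10000 in
theorem edge_in_unique_tetra :
    ∀ v w : Pencil, G.Adj v w →
      ∃! t : FPt × FPt × FPt,
        ({t.1, t.2.1, t.2.2} : Finset FPt) ∈ fanoLines ∧
        v ∈ tetra t.1 t.2.1 t.2.2 ∧ w ∈ tetra t.1 t.2.1 t.2.2 := by
  rintro v w ⟨hvw, hmeet⟩
  choose x hx using fun i => Finset.one_le_card.1 (hmeet i).ge
  have hxv (i : Fin 3) : x i ∈ v.1.2 i := (Finset.mem_inter.1 (hx i)).1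
  have hxw (i : Fin 3) : x i ∈ w.1.2 i := (Finset.mem_inter.1 (hx i)).2
  have hunique (i : Fin 3) {a : FPt} (hav : a ∈ v.1.2 i) (haw : a ∈ w.1.2 i) : a = x i :=
    Finset.card_le_one.1 (hmeet i).le a (Finset.mem_inter.2 ⟨hav, haw⟩) (x i) (hx i)
  have hv := v.2
  have hw := w.2
  have hline : {x 0, x 1, x 2} ∈ fanoLines :=
    mem_fanoLines_of_not_collinear hvw hv.1 hw.1
      (hv.mem_fanoPoints (hxv 0)) (hv.mem_fanoPoints (hxv 1)) (hv.mem_fanoPoints (hxv 2))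
      (hv.not_collinear (by decide) (hxv 0) (hxv 1)) (hv.not_collinear (by decide) (hxv 0) (hxv 2))
      (hv.not_collinear (by decide) (hxv 1) (hxv 2)) (hw.not_collinear (by decide) (hxw 0) (hxw 1))
      (hw.not_collinear (by decide) (hxw 0) (hxw 2)) (hw.not_collinear (by decide) (hxw 1) (hxw 2))
  refine ⟨(x 0, x 1, x 2),
    ⟨hline, mem_tetra_of_mem (hxv 0) (hxv 1) (hxv 2), mem_tetra_of_mem (hxw 0) (hxw 1) (hxw 2)⟩, ?_⟩
  rintro ⟨a, b, c⟩ ⟨-, hvt, hwt⟩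
  obtain ⟨-, hav, hbv, hcv⟩ := mem_tetra.1 hvt
  obtain ⟨-, haw, hbw, hcw⟩ := mem_tetra.1 hwt
  exact Prod.ext (hunique 0 hav haw) (Prod.ext (hunique 1 hbv hbw) (hunique 2 hcv hcw))
end

section
/- The open neighborhood of any vertex of G induces a 4-regular graph on 12 vertices isomorphic to the hemi-rhombicuboctahedron graph (the quotient of the rhombicuboctahedron graph by the antipodal map). -/
/-- Edge list of the hemi-rhombicuboctahedron graph (the quotient of the
rhombicuboctahedron graph by the antipodal map). -/
def hemiEdges : List (Fin 12 × Fin 12) :=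
  [(0,2),(0,3),(0,7),(0,9),(1,2),(1,3),(1,5),(1,11),(2,6),(2,10),(3,4),(3,8),
   (4,6),(4,7),(4,8),(5,6),(5,7),(5,11),(6,10),(7,9),(8,10),(8,11),(9,10),(9,11)]

def hemiAdj (a b : Fin 12) : Prop := (a, b) ∈ hemiEdges ∨ (b, a) ∈ hemiEdges

instance : DecidableRel hemiAdj := fun a b => by unfold hemiAdj; infer_instance

/-- The hemi-rhombicuboctahedron graph: a 4-regular vertex-transitive graph
on 12 vertices. -/
def hemiRCO : SimpleGraph (Fin 12) where
  Adj := hemiAdj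
  symm := ⟨fun _ _ h => h.symm⟩
  loopless := ⟨by intro a; fin_cases a <;> decide⟩

instance : DecidableRel hemiRCO.Adj := fun a b => by
  change Decidable (hemiAdj a b); infer_instance

/-! The collineation group of the Fano plane (a copy of `GL₃(𝔽₂)`, of order 168) acts on ordered
pencils by automorphisms of `G`, and it acts transitively on them: a Singer cycle moves the base
point to any point, and the stabiliser of a point permutes the three lines through it as the full
symmetric group. So all vertex neighbourhoods of `G` are isomorphic, and it suffices to list the
twelve neighbours of one pencil and match them with the edge list of `hemiRCO`. -/

open Pointwise

def SimpleGraph.Iso.induceNeighborSet {V W : Type*} {G : SimpleGraph V} {G' : SimpleGraph W}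
    (φ : G ≃g G') (v : V) :
    G.induce (G.neighborSet v) ≃g G'.induce (G'.neighborSet (φ v)) :=
  φ.induce (φ.toEquiv.bijOn fun _ => φ.apply_mem_neighborSet_iff)

def collineations : Subgroup (Equiv.Perm FPt) :=
  MulAction.stabilizer _ fanoPoints ⊓ MulAction.stabilizer _ fanoLines

lemma mem_collineations_iff {σ : Equiv.Perm FPt} :
    σ ∈ collineations ↔ σ • fanoPoints = fanoPoints ∧ σ • fanoLines = fanoLines := by
  simp only [collineations, Subgroup.mem_inf, MulAction.mem_stabilizer_iff]

lemma IsPencil.smul {σ : Equiv.Perm FPt} (hσ : σ ∈ collineations)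
    {v : FPt × (Fin 3 → Finset FPt)} (hv : IsPencil v) : IsPencil (σ • v) := by
  obtain ⟨hpts, hlines⟩ := mem_collineations_iff.1 hσ
  obtain ⟨hp, hpairs, hinj⟩ := hv
  refine ⟨?_, fun i => ?_, (MulAction.injective σ).comp hinj⟩
  · rw [← hpts]; exact Finset.smul_mem_smul_finset hp
  · obtain ⟨hcard, hnot, hline⟩ := hpairs i
    refine ⟨(Finset.card_smul_finset σ _).trans hcard,
      (Finset.smul_mem_smul_finset_iff σ).not.2 hnot, ?_⟩
    rw [← hlines]
    show insert (σ • v.1) (σ • v.2 i) ∈ σ • fanoLines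
    rw [← Finset.smul_finset_insert]
    exact Finset.smul_mem_smul_finset hline

def collineationIso (σ : collineations) : G ≃g G where
  toFun v := ⟨σ • v.1, v.2.smul σ.2⟩
  invFun v := ⟨σ⁻¹ • v.1, v.2.smul (inv_mem σ.2)⟩
  left_inv v := Subtype.ext (inv_smul_smul (σ : Equiv.Perm FPt) v.1)
  right_inv v := Subtype.ext (smul_inv_smul (σ : Equiv.Perm FPt) v.1)
  map_rel_iff' {v w} := by
    change pAdj ⟨σ • v.1, _⟩ ⟨σ • w.1, _⟩ ↔ pAdj v w
    simp only [pAdj, Prod.smul_fst, Prod.smul_snd, Pi.smul_apply, ne_eq, smul_left_cancel_iff,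
      ← Finset.smul_finset_inter, Finset.card_smul_finset]

def pairsThrough (p : FPt) : Finset (Finset FPt) :=
  (fanoLines.filter (p ∈ ·)).image (·.erase p)

lemma mem_pairsThrough {p : FPt} {s : Finset FPt} (hp : p ∉ s) (hs : insert p s ∈ fanoLines) :
    s ∈ pairsThrough p :=
  Finset.mem_image.2 ⟨insert p s, Finset.mem_filter.2 ⟨hs, Finset.mem_insert_self p s⟩,
    Finset.erase_insert hp⟩

@[elab_as_elim]
lemma Pencil.forall_of_pairsThrough {P : FPt × (Fin 3 → Finset FPt) → Prop}
    (h : ∀ p ∈ fanoPoints, ∀ a ∈ pairsThrough p, ∀ b ∈ pairsThrough p, ∀ c ∈ pairsThrough p,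
      IsPencil (p, ![a, b, c]) → P (p, ![a, b, c]))
    (v : Pencil) : P v.1 := by
  obtain ⟨⟨p, f⟩, hv⟩ := v
  obtain ⟨a, b, c, rfl⟩ : ∃ a b c, f = ![a, b, c] :=
    ⟨f 0, f 1, f 2, by funext i; fin_cases i <;> rfl⟩
  have hmem (i : Fin 3) : ![a, b, c] i ∈ pairsThrough p :=
    mem_pairsThrough (hv.2.1 i).2.1 (hv.2.1 i).2.2
  exact h p hv.1 a (hmem 0) b (hmem 1) c (hmem 2) hv

/- Reading `n : FPt` in binary identifies the Fano plane with the projective plane over `𝔽₂`, whose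
lines are the triples `{x, y, x xor y}`. `singerCycle` is multiplication by a root of `X³ + X + 1`
in `𝔽₈`; `rotateAtOne` and `swapAtOne` are linear maps fixing `1` that permute the lines through it
as a 3-cycle and a transposition. -/
def singerCycle : Equiv.Perm FPt := List.formPerm [1, 2, 4, 3, 6, 7, 5]
def rotateAtOne : Equiv.Perm FPt := List.formPerm [2, 4, 6] * List.formPerm [3, 5, 7]
def swapAtOne : Equiv.Perm FPt := Equiv.swap 2 4 * Equiv.swap 3 5

lemma singerCycle_mem : singerCycle ∈ collineations := mem_collineations_iff.2 (by decide)
lemma rotateAtOne_mem : rotateAtOne ∈ collineations := mem_collineations_iff.2 (by decide)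
lemma swapAtOne_mem : swapAtOne ∈ collineations := mem_collineations_iff.2 (by decide)

def basePencil : Pencil := ⟨(1, ![{2, 3}, {4, 5}, {6, 7}]), by decide⟩

set_option maxRecDepth 20000 in
lemma exists_word_smul_basePencil (v : Pencil) : ∃ i : Fin 7, ∃ j : Fin 3, ∃ k : Fin 2,
    (singerCycle ^ (i : ℕ) * rotateAtOne ^ (j : ℕ) * swapAtOne ^ (k : ℕ)) • basePencil.1 = v.1 := by
  refine Pencil.forall_of_pairsThrough ?_ v
  decide

lemma exists_iso_apply_basePencil (v : Pencil) : ∃ φ : G ≃g G, φ basePencil = v := by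
  obtain ⟨i, j, k, h⟩ := exists_word_smul_basePencil v
  have hmem : singerCycle ^ (i : ℕ) * rotateAtOne ^ (j : ℕ) * swapAtOne ^ (k : ℕ) ∈ collineations :=
    mul_mem (mul_mem (pow_mem singerCycle_mem _) (pow_mem rotateAtOne_mem _))
      (pow_mem swapAtOne_mem _)
  exact ⟨collineationIso ⟨_, hmem⟩, Subtype.ext h⟩

-- Listed in the order that makes `baseNeighbor` an isomorphism from `hemiRCO`.
def baseNeighbor (i : Fin 12) : Pencil :=
  ⟨![(2, ![{1, 3}, {4, 6}, {5, 7}]), (2, ![{1, 3}, {5, 7}, {4, 6}]),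
     (3, ![{1, 2}, {4, 7}, {5, 6}]), (3, ![{1, 2}, {5, 6}, {4, 7}]),
     (4, ![{2, 6}, {1, 5}, {3, 7}]), (4, ![{3, 7}, {1, 5}, {2, 6}]),
     (5, ![{2, 7}, {1, 4}, {3, 6}]), (5, ![{3, 6}, {1, 4}, {2, 7}]),
     (6, ![{2, 4}, {3, 5}, {1, 7}]), (6, ![{3, 5}, {2, 4}, {1, 7}]),
     (7, ![{2, 5}, {3, 4}, {1, 6}]), (7, ![{3, 4}, {2, 5}, {1, 6}])] i, by revert i; decide⟩

lemma adj_basePencil_baseNeighbor : ∀ i, G.Adj basePencil (baseNeighbor i) := by decide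

lemma baseNeighbor_injective : Function.Injective baseNeighbor := by decide

lemma baseNeighbor_adj_iff : ∀ i j, G.Adj (baseNeighbor i) (baseNeighbor j) ↔ hemiRCO.Adj i j := by
  decide

set_option maxRecDepth 20000 in
lemma exists_baseNeighbor_of_adj (v : Pencil) (hv : G.Adj basePencil v) :
    ∃ i, baseNeighbor i = v := by
  suffices ∃ i, (baseNeighbor i).1 = v.1 from this.imp fun _ => Subtype.ext
  revert hv
  show pAdj basePencil v → _
  unfold pAdj
  refine Pencil.forall_of_pairsThrough ?_ v
  decide

noncomputable def baseNeighborhoodIso : hemiRCO ≃g G.induce (G.neighborSet basePencil) where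
  toEquiv := Equiv.ofBijective (fun i => ⟨baseNeighbor i, adj_basePencil_baseNeighbor i⟩)
    ⟨fun _ _ h => baseNeighbor_injective (congrArg Subtype.val h), fun ⟨v, hv⟩ =>
      (exists_baseNeighbor_of_adj v hv).imp fun _ hi => Subtype.ext hi⟩
  map_rel_iff' := baseNeighbor_adj_iff _ _

theorem neighborhood_is_hemi_rhombicuboctahedron :
    (∀ a : Fin 12, hemiRCO.degree a = 4) ∧
    ∀ v : Pencil, Nonempty ((G.induce (G.neighborSet v)) ≃g hemiRCO) := by
  refine ⟨by decide, fun v => ?_⟩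
  obtain ⟨φ, rfl⟩ := exists_iso_apply_basePencil v
  exact ⟨(φ.induceNeighborSet basePencil).symm.trans baseNeighborhoodIso.symm⟩
end
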